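/- arXiv:2511.00958 — 4 statements merged into one kernel-verified Lean document; each statement's English description precedes it below -/
import Mathlib

section
/- For x ∈ ℝⁿ with mean μ = (1/n)∑ x_i and centered vector y = x - μ·1, the Jacobian of layer normalization LN(x, ε) = y/sqrt(σ_n² + ε), where σ_n² = (1/n)‖y‖₂², equals (1/sqrt(σ_n² + ε)) · (I - y yᵀ/(‖y‖₂² + nε)) · (I - (1/n)J), where J is the n×n all-ones matrix and I is the identity. -/
/-!
Layer normalization factors as `LN = N ∘ P`, where `P = I - (1/n) J` is the linear centering map
and `N y = s(y)⁻¹ • y`, `s(y) = √(‖y‖²/n + ε)`, is RMS normalization. By the chain rule the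
Jacobian of `LN` at `x` is `DN(Px) · P`, and the product rule gives
`DN(y) = s⁻¹ (I - y yᵀ / (n s²))` with `n s² = ‖y‖² + n ε`.
-/

open scoped Matrix

theorem Real.hasDerivAt_inv_sqrt {t : ℝ} (ht : 0 < t) :
    HasDerivAt (fun s => (√s)⁻¹) (-(2 * √t ^ 3)⁻¹) t := by
  have hw : 0 < √t := Real.sqrt_pos.2 ht
  refine ((Real.hasDerivAt_sqrt ht.ne').inv hw.ne').congr_deriv ?_
  field_simp

theorem Matrix.one_sub_smul_of_one_mulVec {ι α : Type*} [Fintype ι] [DecidableEq ι] [Ring α]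
    (c : α) (x : ι → α) :
    (1 - c • Matrix.of fun _ _ : ι => (1 : α)) *ᵥ x = fun i => x i - c * ∑ j, x j := by
  ext i
  simp [Matrix.mulVec, dotProduct, Matrix.one_apply, sub_mul, Finset.sum_sub_distrib,
    Finset.mul_sum]

section RMSNorm

variable {ι : Type*} [Fintype ι]

noncomputable def rmsNorm (ε : ℝ) (z : ι → ℝ) : ι → ℝ :=
  (√((Fintype.card ι : ℝ)⁻¹ * ∑ j, z j ^ 2 + ε))⁻¹ • z

theorem hasFDerivAt_sum_sq (y : ι → ℝ) :
    HasFDerivAt (fun z : ι → ℝ => ∑ j, z j ^ 2)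
      (∑ j, (2 * y j) • ContinuousLinearMap.proj j : (ι → ℝ) →L[ℝ] ℝ) y := by
  refine HasFDerivAt.fun_sum fun j _ => ?_
  simpa using (hasFDerivAt_apply (𝕜 := ℝ) (F' := fun _ : ι => ℝ) j y).pow 2

theorem hasFDerivAt_inv_sqrt_mean_sq_add {ε : ℝ} (hε : 0 < ε) (y : ι → ℝ) :
    HasFDerivAt (fun z : ι → ℝ => (√((Fintype.card ι : ℝ)⁻¹ * ∑ j, z j ^ 2 + ε))⁻¹)
      ((-(2 * √((Fintype.card ι : ℝ)⁻¹ * ∑ j, y j ^ 2 + ε) ^ 3)⁻¹ * (Fintype.card ι : ℝ)⁻¹) •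
        (∑ j, (2 * y j) • ContinuousLinearMap.proj j : (ι → ℝ) →L[ℝ] ℝ)) y := by
  have hpos : 0 < (Fintype.card ι : ℝ)⁻¹ * ∑ j, y j ^ 2 + ε := by positivity
  rw [mul_smul]
  exact (Real.hasDerivAt_inv_sqrt hpos).comp_hasFDerivAt (h₂ := fun s => (√s)⁻¹) y
    (((hasFDerivAt_sum_sq y).const_mul _).add_const ε)

theorem hasFDerivAt_rmsNorm [Nonempty ι] [DecidableEq ι] {ε : ℝ} (hε : 0 < ε) (y : ι → ℝ) :
    HasFDerivAt (rmsNorm ε)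
      (LinearMap.toContinuousLinearMap (Matrix.toLin'
        ((√((Fintype.card ι : ℝ)⁻¹ * ∑ j, y j ^ 2 + ε))⁻¹ •
          (1 - (∑ j, y j ^ 2 + Fintype.card ι * ε)⁻¹ • Matrix.of fun i j => y i * y j)))) y := by
  refine ((hasFDerivAt_inv_sqrt_mean_sq_add hε y).smul (hasFDerivAt_id y)).congr_fderiv ?_
  set w := √((Fintype.card ι : ℝ)⁻¹ * ∑ j, y j ^ 2 + ε)
  have hw : 0 < w := Real.sqrt_pos.2 (by positivity)
  have hw_sq : ∑ j, y j ^ 2 + Fintype.card ι * ε = Fintype.card ι * w ^ 2 := by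
    rw [Real.sq_sqrt (by positivity)]
    field_simp
  ext v i
  simp only [neg_mul, add_apply, smul_apply, ContinuousLinearMap.id_apply,
    ContinuousLinearMap.smulRight_apply, sum_apply, ContinuousLinearMap.proj_apply,
    smul_eq_mul, Matrix.smul_of, map_smul, map_sub, Matrix.toLin'_one, sub_apply,
    LinearMap.coe_toContinuousLinearMap', LinearMap.id_coe, Matrix.toLin'_apply, Pi.sub_apply,
    Pi.add_apply, Pi.smul_apply, id_eq, Matrix.mulVec, dotProduct, Matrix.of_apply]
  simp only [mul_assoc, ← Finset.mul_sum, hw_sq]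
  field_simp
  ring

end RMSNorm

/-- The Jacobian of layer normalization
`LN(x) = (x - μ(x)·1)/√(σ_n²(x) + ε)` at `x` equals
`(1/√(σ_n²+ε)) · (I - y yᵀ/(‖y‖₂² + nε)) · (I - (1/n)J)` where `y = x - μ(x)·1`,
`J` the all-ones matrix. -/
theorem ln_jacobian (n : ℕ) (hn : 0 < n) (ε : ℝ) (hε : 0 < ε)
    (LN : (Fin n → ℝ) → (Fin n → ℝ))
    (hLN : ∀ x : Fin n → ℝ, LN x = fun i =>
      (x i - (n : ℝ)⁻¹ * ∑ j, x j) /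
        Real.sqrt ((n : ℝ)⁻¹ * (∑ j, (x j - (n : ℝ)⁻¹ * ∑ l, x l) ^ 2) + ε))
    (x : Fin n → ℝ) (y : Fin n → ℝ)
    (hy : y = fun i => x i - (n : ℝ)⁻¹ * ∑ j, x j) :
    HasFDerivAt LN
      (LinearMap.toContinuousLinearMap (Matrix.toLin'
        ((Real.sqrt ((n : ℝ)⁻¹ * (∑ j, (y j) ^ 2) + ε))⁻¹ •
          ((1 - ((∑ j, (y j) ^ 2) + (n : ℝ) * ε)⁻¹ •
              Matrix.of (fun i j : Fin n => y i * y j)) *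
           (1 - (n : ℝ)⁻¹ • Matrix.of (fun _ _ : Fin n => (1 : ℝ))))))) x := by
  have : Nonempty (Fin n) := Fin.pos_iff_nonempty.1 hn
  set P := 1 - (n : ℝ)⁻¹ • Matrix.of fun _ _ : Fin n => (1 : ℝ)
  have hP : ∀ z, P *ᵥ z = fun i => z i - (n : ℝ)⁻¹ * ∑ j, z j :=
    Matrix.one_sub_smul_of_one_mulVec _
  have hLN_comp : LN = rmsNorm ε ∘ (P *ᵥ ·) := by
    funext z i
    simp only [hLN, rmsNorm, Function.comp_apply, hP, Fintype.card_fin, Pi.smul_apply,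
      smul_eq_mul, div_eq_inv_mul]
  have hderiv := (hasFDerivAt_rmsNorm hε (P *ᵥ x)).comp x
    (LinearMap.toContinuousLinearMap (Matrix.toLin' P)).hasFDerivAt
  rw [hP, ← hy, Fintype.card_fin] at hderiv
  rw [hLN_comp, ← smul_mul_assoc, Matrix.toLin'_mul]
  exact hderiv
end

section
/- Let ReLU feedforward networks on ℝ^{n_0} have depth K with layer widths n_1,...,n_K and weight-norm bounds s_1,...,s_K ≥ 0. For any a_i ∈ [0, s_i] (i = 1,...,K), there exist weight matrices W_i with induced infinity norm ‖W_i‖ ≤ s_i such that the resulting network h*(x) = ReLU(W_K(...ReLU(W_1 x)...)) satisfies h*(x) = (∏_{i=1}^K a_i)·ReLU(x^{(n_1,...,n_K)}) for all x, and its exact Lipschitz constant with respect to x (in sup norm) equals ∏_{i=1}^K a_i. -/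
/-- Induced infinity norm of a matrix: maximum absolute row sum. -/
noncomputable def infNorm {n m : ℕ} (A : Matrix (Fin n) (Fin m) ℝ) : ℝ :=
  ⨆ i, ∑ j, |A i j|

/-- Coordinatewise ReLU. -/
def relu {k : ℕ} (v : Fin k → ℝ) : Fin k → ℝ := fun i => max (v i) 0

/-- `padChain n a b v` is the result `v^{(n (a+1), ..., n b)}` of successively applying the
truncation/zero-padding maps with target sizes `n (a+1), …, n b` to `v : Fin (n a) → ℝ`:
coordinate `t` survives iff `t < n j` for every intermediate size `n j`, `a ≤ j < b`. -/
def padChain (n : ℕ → ℕ) (a b : ℕ) (v : Fin (n a) → ℝ) : Fin (n b) → ℝ :=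
  fun t => if h : (t : ℕ) < n a ∧ ∀ j, a ≤ j → j < b → (t : ℕ) < n j then v ⟨t, h.1⟩ else 0


/-!
Take `W_i = a_i I_i`. Since `a_i ≥ 0`, the ReLU commutes with the scaling and with the
truncation/padding maps and is idempotent, so by induction on depth the network is
`x ↦ (∏ a_i) • ReLU(x^{(n_1,…,n_K)})`. Truncation/padding and ReLU are `1`-Lipschitz in the sup
norm, giving the upper bound; since all widths are positive the first basis vector survives the
truncations, and comparing its image with that of `0` shows that `∏ a_i` cannot be improved.
-/

open Finset Matrix

/-- The truncation/zero-padding map `v ↦ v^{(m)}`. -/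
def truncPad {k : ℕ} (m : ℕ) (v : Fin k → ℝ) : Fin m → ℝ :=
  fun t => if h : (t : ℕ) < k then v ⟨t, h⟩ else 0

/-- The matrix `I` of `v ↦ v^{(m)}`. -/
def truncPadMatrix (m k : ℕ) : Matrix (Fin m) (Fin k) ℝ :=
  Matrix.of fun r c => if (r : ℕ) = c then 1 else 0

section Relu

variable {k : ℕ}

lemma relu_nonneg (v : Fin k → ℝ) : 0 ≤ relu v := fun _ => le_max_right _ _

lemma relu_relu (v : Fin k → ℝ) : relu (relu v) = relu v :=
  funext fun t => max_eq_left (relu_nonneg v t)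

lemma relu_smul_of_nonneg {c : ℝ} (hc : 0 ≤ c) (v : Fin k → ℝ) : relu (c • v) = c • relu v :=
  funext fun t => by simp only [relu, Pi.smul_apply, smul_eq_mul, mul_max_of_nonneg _ _ hc, mul_zero]

lemma norm_relu_sub_relu_le (v w : Fin k → ℝ) : ‖relu v - relu w‖ ≤ ‖v - w‖ :=
  (pi_norm_le_iff_of_nonneg (norm_nonneg _)).2 fun t =>
    (abs_max_sub_max_le_abs (v t) (w t) 0).trans (norm_le_pi_norm (v - w) t)

end Relu

section TruncPad

variable {k : ℕ} (m : ℕ)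

lemma truncPad_smul (c : ℝ) (v : Fin k → ℝ) : truncPad m (c • v) = c • truncPad m v :=
  funext fun t => by by_cases ht : (t : ℕ) < k <;> simp [truncPad, ht]

lemma truncPad_relu (v : Fin k → ℝ) : truncPad m (relu v) = relu (truncPad m v) :=
  funext fun t => by by_cases ht : (t : ℕ) < k <;> simp [truncPad, relu, ht]

lemma truncPadMatrix_mulVec (v : Fin k → ℝ) : truncPadMatrix m k *ᵥ v = truncPad m v := by
  funext r
  simp only [truncPadMatrix, truncPad, Matrix.mulVec, dotProduct, Matrix.of_apply, ite_mul,
    one_mul, zero_mul]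
  split_ifs with hr
  · rw [Finset.sum_eq_single_of_mem ⟨r, hr⟩ (Finset.mem_univ _)
      fun c _ hc => if_neg fun h => hc (Fin.ext h.symm), if_pos rfl]
  · exact Finset.sum_eq_zero fun c _ => if_neg fun h : (r : ℕ) = c => hr (h ▸ c.isLt)

lemma sum_abs_truncPadMatrix_le_one (r : Fin m) : ∑ c, |truncPadMatrix m k r c| ≤ 1 := by
  have entry_nonneg (c : Fin k) : 0 ≤ truncPadMatrix m k r c := by
    simp only [truncPadMatrix, Matrix.of_apply]; split_ifs <;> norm_num
  calc ∑ c, |truncPadMatrix m k r c| = (truncPadMatrix m k *ᵥ 1) r := by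
        simp only [Matrix.mulVec, dotProduct, Pi.one_apply, mul_one, abs_of_nonneg (entry_nonneg _)]
    _ ≤ 1 := by rw [truncPadMatrix_mulVec]; unfold truncPad; split_ifs <;> simp

lemma infNorm_smul_truncPadMatrix_le {a s : ℝ} (ha : a ∈ Set.Icc 0 s) :
    infNorm (a • truncPadMatrix m k) ≤ s := by
  refine Real.iSup_le (fun r => ?_) (ha.1.trans ha.2)
  calc ∑ c, |(a • truncPadMatrix m k) r c| = a * ∑ c, |truncPadMatrix m k r c| := by
        simp only [Matrix.smul_apply, smul_eq_mul, abs_mul, abs_of_nonneg ha.1, Finset.mul_sum]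
    _ ≤ a * 1 := mul_le_mul_of_nonneg_left (sum_abs_truncPadMatrix_le_one m r) ha.1
    _ ≤ s := by rw [mul_one]; exact ha.2

end TruncPad

section PadChain

variable (n : ℕ → ℕ) {a b : ℕ}

lemma padChain_self (v : Fin (n a) → ℝ) : padChain n a a v = v :=
  funext fun t => dif_pos ⟨t.isLt, fun _ h₁ h₂ => absurd h₂ (not_lt.2 h₁)⟩

lemma padChain_succ (hab : a ≤ b) (v : Fin (n a) → ℝ) :
    padChain n a (b + 1) v = truncPad (n (b + 1)) (padChain n a b v) := by
  funext t
  unfold padChain truncPad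
  dsimp only
  by_cases hb : (t : ℕ) < n b
  · rw [dif_pos hb]
    by_cases hc : (t : ℕ) < n a ∧ ∀ j, a ≤ j → j < b → (t : ℕ) < n j
    · rw [dif_pos hc, dif_pos ⟨hc.1, fun j h₁ h₂ =>
        (Nat.lt_succ_iff_lt_or_eq.1 h₂).elim (hc.2 j h₁) fun hj => hj ▸ hb⟩]
    · rw [dif_neg hc, dif_neg fun h => hc ⟨h.1, fun j h₁ h₂ => h.2 j h₁ (Nat.lt_succ_of_lt h₂)⟩]
  · rw [dif_neg hb, dif_neg fun h => hb (h.2 b hab b.lt_succ_self)]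

lemma norm_padChain_le (v : Fin (n a) → ℝ) : ‖padChain n a b v‖ ≤ ‖v‖ :=
  (pi_norm_le_iff_of_nonneg (norm_nonneg v)).2 fun t => by
    unfold padChain
    split_ifs
    · exact norm_le_pi_norm v _
    · simp

lemma padChain_sub (v w : Fin (n a) → ℝ) :
    padChain n a b (v - w) = padChain n a b v - padChain n a b w :=
  funext fun t => by simp only [padChain, Pi.sub_apply]; split_ifs <;> simp

lemma padChain_apply_zero (hn : ∀ j, 0 < n j) (v : Fin (n a) → ℝ) :
    padChain n a b v ⟨0, hn b⟩ = v ⟨0, hn a⟩ :=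
  dif_pos ⟨hn a, fun j _ _ => hn j⟩

end PadChain

section Network

variable {n : ℕ → ℕ} {c : ℝ}

lemma relu_truncPadMatrix_network_eq {a : ℕ → ℝ} (ha : ∀ i, 0 ≤ a i)
    {h : (i : ℕ) → (Fin (n 0) → ℝ) → (Fin (n i) → ℝ)} (h0 : ∀ x, h 0 x = x)
    (hstep : ∀ i x, h (i + 1) x = relu ((a i • truncPadMatrix (n (i + 1)) (n i)) *ᵥ h i x))
    (m : ℕ) (x : Fin (n 0) → ℝ) :
    h (m + 1) x = (∏ i ∈ range (m + 1), a i) • relu (padChain n 0 (m + 1) x) := by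
  induction m with
  | zero =>
    rw [hstep, h0, Matrix.smul_mulVec, truncPadMatrix_mulVec, relu_smul_of_nonneg (ha 0),
      padChain_succ n le_rfl, padChain_self, prod_range_one]
  | succ m ih =>
    rw [hstep, ih, Matrix.smul_mulVec, truncPadMatrix_mulVec, truncPad_smul, smul_smul,
      relu_smul_of_nonneg (mul_nonneg (ha _) (prod_nonneg fun i _ => ha i)), truncPad_relu,
      relu_relu, padChain_succ n (b := m + 1) (Nat.zero_le _), prod_range_succ _ (m + 1),
      mul_comm (a (m + 1))]

lemma norm_smul_relu_padChain_sub_le (hc : 0 ≤ c) {b : ℕ} (x y : Fin (n 0) → ℝ) :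
    ‖c • relu (padChain n 0 b x) - c • relu (padChain n 0 b y)‖ ≤ c * ‖x - y‖ := by
  rw [← smul_sub, norm_smul, Real.norm_of_nonneg hc]
  gcongr
  calc ‖relu (padChain n 0 b x) - relu (padChain n 0 b y)‖
      ≤ ‖padChain n 0 b x - padChain n 0 b y‖ := norm_relu_sub_relu_le _ _
    _ = ‖padChain n 0 b (x - y)‖ := by rw [padChain_sub]
    _ ≤ ‖x - y‖ := norm_padChain_le n _

lemma le_of_lipschitz_smul_relu_padChain (hn : ∀ j, 0 < n j) (hc : 0 ≤ c) {b : ℕ} {L : ℝ}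
    (hL : ∀ x y : Fin (n 0) → ℝ,
      ‖c • relu (padChain n 0 b x) - c • relu (padChain n 0 b y)‖ ≤ L * ‖x - y‖) :
    c ≤ L := by
  set e₀ : Fin (n 0) → ℝ := Pi.single ⟨0, hn 0⟩ 1
  have image_e₀ : (c • relu (padChain n 0 b e₀)) ⟨0, hn b⟩ = c := by
    simp [relu, padChain_apply_zero n hn, e₀]
  have image_zero : relu (padChain n 0 b (0 : Fin (n 0) → ℝ)) = 0 := by
    rw [show padChain n 0 b 0 = 0 by simpa using padChain_sub n (b := b) 0 0]
    exact funext fun _ => max_self 0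
  calc c = ‖(c • relu (padChain n 0 b e₀)) ⟨0, hn b⟩‖ := by rw [image_e₀, Real.norm_of_nonneg hc]
    _ ≤ ‖c • relu (padChain n 0 b e₀) - c • relu (padChain n 0 b 0)‖ := by
        rw [image_zero, smul_zero, sub_zero]; exact norm_le_pi_norm _ _
    _ ≤ L := by simpa [e₀, Pi.norm_single] using hL e₀ 0

end Network

/-- For a depth-`K` ReLU feedforward family with widths `n_1,…,n_K` and weight
bounds `s_1,…,s_K`, and any `a_i ∈ [0, s_i]`, there are weights `W_i` with `‖W_i‖ ≤ s_i`
such that the network equals `(∏ a_i)·ReLU(x^{(n_1,…,n_K)})` and its exact Lipschitz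
constant (sup norm) equals `∏ a_i`. -/
theorem relu_ffn_lower_bound (K : ℕ) (hK : 0 < K) (n : ℕ → ℕ) (hn : ∀ i, 0 < n i)
    (s a : ℕ → ℝ) (ha : ∀ i, a i ∈ Set.Icc 0 (s i)) :
    ∃ W : (i : ℕ) → Matrix (Fin (n (i + 1))) (Fin (n i)) ℝ,
      (∀ i, i < K → infNorm (W i) ≤ s i) ∧
      ∀ h : (i : ℕ) → (Fin (n 0) → ℝ) → (Fin (n i) → ℝ),
        (∀ x, h 0 x = x) →
        (∀ i x, h (i + 1) x = relu ((W i).mulVec (h i x))) →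
        (∀ x, h K x = (∏ i ∈ Finset.range K, a i) • relu (padChain n 0 K x)) ∧
        (∀ x y, ‖h K x - h K y‖ ≤ (∏ i ∈ Finset.range K, a i) * ‖x - y‖) ∧
        (∀ L : ℝ, (∀ x y, ‖h K x - h K y‖ ≤ L * ‖x - y‖) →
          (∏ i ∈ Finset.range K, a i) ≤ L) := by
  refine ⟨fun i => a i • truncPadMatrix (n (i + 1)) (n i),
    fun i _ => infNorm_smul_truncPadMatrix_le _ (ha i), fun h h0 hstep => ?_⟩
  obtain ⟨m, rfl⟩ : ∃ m, K = m + 1 := Nat.exists_eq_add_one.2 hK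
  have hc : 0 ≤ ∏ i ∈ range (m + 1), a i := prod_nonneg fun i _ => (ha i).1
  have network_eq := relu_truncPadMatrix_network_eq (fun i => (ha i).1) h0 hstep m
  simp only [network_eq, implies_true, true_and]
  exact ⟨norm_smul_relu_padChain_sub_le hc, fun L hL =>
    le_of_lipschitz_smul_relu_padChain hn hc hL⟩
end

section
/- Let u_K be a normalized feedforward network as above, and let A_{i-1} = sup_x ‖u_{i-1}(x)‖_∞ be finite. Then for fixed input x, the map W_i ↦ u_K(x) (with other weights fixed) is Lipschitz with respect to the induced infinity norm on W_i, with constant at most A_{i-1} times the Lipschitz constant of u_K with respect to y_i; hence at most A_{i-1}·‖W_{i+1}‖⋯‖W_K‖·∏_{k=i}^K L_k for i < K. -/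
section InfNorm

open Matrix

attribute [local instance] Matrix.linftyOpNormedAddCommGroup

variable {n m : ℕ}

theorem infNorm_eq_linfty_opNorm (A : Matrix (Fin n) (Fin m) ℝ) : infNorm A = ‖A‖ := by
  rw [linfty_opNorm_def, infNorm]
  rcases isEmpty_or_nonempty (Fin n) with hn | hn
  · simp
  · rw [← Finset.sup'_eq_sup Finset.univ_nonempty, Finset.sup'_univ_eq_ciSup, NNReal.coe_iSup]
    simp [Real.norm_eq_abs]

theorem infNorm_nonneg (A : Matrix (Fin n) (Fin m) ℝ) : 0 ≤ infNorm A :=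
  infNorm_eq_linfty_opNorm A ▸ norm_nonneg A

theorem norm_mulVec_le_infNorm_mul (A : Matrix (Fin n) (Fin m) ℝ) (v : Fin m → ℝ) :
    ‖A *ᵥ v‖ ≤ infNorm A * ‖v‖ :=
  infNorm_eq_linfty_opNorm A ▸ linfty_opNorm_mulVec A v

theorem norm_mulVec_sub_mulVec_le (M M' : Matrix (Fin n) (Fin m) ℝ) (v : Fin m → ℝ) :
    ‖M *ᵥ v - M' *ᵥ v‖ ≤ infNorm (M - M') * ‖v‖ := by
  rw [← sub_mulVec]
  exact norm_mulVec_le_infNorm_mul _ _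

end InfNorm

section Layer

open Matrix

variable {n m : ℕ} {g NO : (Fin n → ℝ) → (Fin n → ℝ)} {L : ℝ}

theorem norm_layer_sub_layer_le (hL : 0 ≤ L) (hg : ∀ u v, ‖g u - g v‖ ≤ ‖u - v‖)
    (hNO : ∀ u v, ‖NO u - NO v‖ ≤ L * ‖u - v‖) (W : Matrix (Fin n) (Fin m) ℝ) (v w : Fin m → ℝ) :
    ‖g (NO (W *ᵥ v)) - g (NO (W *ᵥ w))‖ ≤ infNorm W * L * ‖v - w‖ := by
  calc ‖g (NO (W *ᵥ v)) - g (NO (W *ᵥ w))‖ ≤ L * ‖W *ᵥ (v - w)‖ := by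
        rw [mulVec_sub]
        exact (hg _ _).trans (hNO _ _)
    _ ≤ L * (infNorm W * ‖v - w‖) := by gcongr; exact norm_mulVec_le_infNorm_mul W _
    _ = infNorm W * L * ‖v - w‖ := by ring

theorem norm_layer_sub_layer_weight_le (hL : 0 ≤ L) (hg : ∀ u v, ‖g u - g v‖ ≤ ‖u - v‖)
    (hNO : ∀ u v, ‖NO u - NO v‖ ≤ L * ‖u - v‖) (M M' : Matrix (Fin n) (Fin m) ℝ)
    (v : Fin m → ℝ) :
    ‖g (NO (M *ᵥ v)) - g (NO (M' *ᵥ v))‖ ≤ L * infNorm (M - M') * ‖v‖ := by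
  calc ‖g (NO (M *ᵥ v)) - g (NO (M' *ᵥ v))‖ ≤ L * ‖M *ᵥ v - M' *ᵥ v‖ := (hg _ _).trans (hNO _ _)
    _ ≤ L * (infNorm (M - M') * ‖v‖) := by gcongr; exact norm_mulVec_sub_mulVec_le M M' v
    _ = L * infNorm (M - M') * ‖v‖ := by ring

end Layer

theorem le_prod_Ioc_mul_of_le_mul {d c : ℕ → ℝ} {i K : ℕ} (hc : ∀ k, 0 ≤ c k)
    (hd : ∀ k, i < k → d (k + 1) ≤ c k * d k) (hiK : i ≤ K) :
    d (K + 1) ≤ (∏ k ∈ Finset.Ioc i K, c k) * d (i + 1) := by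
  induction K, hiK using Nat.le_induction with
  | base => simp
  | succ K hiK ih =>
    calc d (K + 1 + 1) ≤ c (K + 1) * d (K + 1) := hd (K + 1) (by omega)
      _ ≤ c (K + 1) * ((∏ k ∈ Finset.Ioc i K, c k) * d (i + 1)) :=
        mul_le_mul_of_nonneg_left ih (hc _)
      _ = (∏ k ∈ Finset.Ioc i (K + 1), c k) * d (i + 1) := by
        rw [Finset.prod_Ioc_succ_top (by omega)]
        ring

/-- In a normalized feedforward network with layers `0,…,K` (output
`U M (K+1)`), where `M` denotes the candidate weight matrix at layer `i`, and where
`A ≥ sup ‖u_{i-1}‖` bounds the input to layer `i`, the map `M ↦ u_K(x)` (fixed input `x`,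
other weights fixed) is Lipschitz from the induced infinity norm to the sup norm with
constant at most `A·‖W_{i+1}‖⋯‖W_K‖·∏_{k=i}^K L_k`. -/
theorem normalized_weight_lipschitz (K : ℕ) (n : ℕ → ℕ)
    (W : (j : ℕ) → Matrix (Fin (n (j + 1))) (Fin (n j)) ℝ)
    (g NO : (j : ℕ) → (Fin (n (j + 1)) → ℝ) → (Fin (n (j + 1)) → ℝ))
    (L : ℕ → ℝ) (hL : ∀ j, 0 ≤ L j)
    (hg : ∀ j u v, ‖g j u - g j v‖ ≤ ‖u - v‖)
    (hNO : ∀ j u v, ‖NO j u - NO j v‖ ≤ L j * ‖u - v‖)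
    (i : ℕ) (hiK : i ≤ K) (x : Fin (n 0) → ℝ)
    (U : Matrix (Fin (n (i + 1))) (Fin (n i)) ℝ → (j : ℕ) → (Fin (n j) → ℝ))
    (hU0 : ∀ M, U M 0 = x)
    (hUrec : ∀ M j, j ≠ i → U M (j + 1) = g j (NO j ((W j).mulVec (U M j))))
    (hUi : ∀ M, U M (i + 1) = g i (NO i (M.mulVec (U M i))))
    (A : ℝ) (hA : ∀ M, ‖U M i‖ ≤ A) :
    ∀ M M', ‖U M (K + 1) - U M' (K + 1)‖ ≤
      A * ((∏ j ∈ Finset.Ioc i K, infNorm (W j)) * ∏ j ∈ Finset.Icc i K, L j) *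
        infNorm (M - M') := by
  intro M M'
  have agree_below : ∀ j ≤ i, U M j = U M' j := by
    intro j hj
    induction j with
    | zero => rw [hU0, hU0]
    | succ j ih => rw [hUrec M j (by omega), hUrec M' j (by omega), ih (by omega)]
  have at_layer_i : ‖U M (i + 1) - U M' (i + 1)‖ ≤ L i * infNorm (M - M') * A := by
    rw [hUi, hUi, ← agree_below i le_rfl]
    refine (norm_layer_sub_layer_weight_le (hL i) (hg i) (hNO i) M M' _).trans ?_
    gcongr
    · exact mul_nonneg (hL i) (infNorm_nonneg _)
    · exact hA M
  have above_layer_i : ∀ k, i < k → ‖U M (k + 1) - U M' (k + 1)‖ ≤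
      infNorm (W k) * L k * ‖U M k - U M' k‖ := by
    intro k hk
    rw [hUrec M k hk.ne', hUrec M' k hk.ne']
    exact norm_layer_sub_layer_le (hL k) (hg k) (hNO k) (W k) _ _
  have gain_nonneg : ∀ k, 0 ≤ infNorm (W k) * L k := fun k => mul_nonneg (infNorm_nonneg _) (hL k)
  calc ‖U M (K + 1) - U M' (K + 1)‖
      ≤ (∏ k ∈ Finset.Ioc i K, infNorm (W k) * L k) * ‖U M (i + 1) - U M' (i + 1)‖ :=
        le_prod_Ioc_mul_of_le_mul (d := fun k => ‖U M k - U M' k‖) gain_nonneg above_layer_i hiK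
    _ ≤ (∏ k ∈ Finset.Ioc i K, infNorm (W k) * L k) * (L i * infNorm (M - M') * A) :=
        mul_le_mul_of_nonneg_left at_layer_i (Finset.prod_nonneg fun k _ => gain_nonneg k)
    _ = A * ((∏ j ∈ Finset.Ioc i K, infNorm (W j)) * ∏ j ∈ Finset.Icc i K, L j) *
          infNorm (M - M') := by
        rw [Finset.prod_mul_distrib, Finset.Icc_eq_cons_Ioc hiK, Finset.prod_cons]
        ring
end

section
/- Let f and g be real functions with g differentiable, and consider the scalar-output network h(x) = g(W h_K(x)) with W = c·1ᵀ (the row vector with all entries c > 0) and h_K built with W_j = a_j I_j for j > i (a_j > 0). Then for the empirical loss L(h, D) = (1/m)∑_{x∈D} f(h(x)), the partial gradient with respect to the t-th row W_{it} of W_i equals (c·∏_{j=i+1}^K a_j / m)·∑_{x∈D} (f∘g)'(u(x))·𝟙[W_{it} h_{i-1}(x) ≥ 0]·h_{i-1}(x)ᵀ for any t ≤ min{n_{i+1},...,n_K}, where u(x) = W h_K(x); and the gradient with respect to W_{it} is zero for t > min{n_{i+1},...,n_K}. -/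
/-!
Layers `0, …, i` do not see the row `w`, and on nonnegative inputs a layer `ReLU(a_j I_j ·)` with
`a_j ≥ 0` only rescales by `a_j` and truncates to the first `n_{j+1}` coordinates. Hence
`u_w(x) = c ∏ a_j (𝟙[t survives] · max (w ⬝ h_{i-1}(x)) 0 + C(x))` with `C` independent of `w`,
where coordinate `t` survives iff `t < n_j` for all `i + 1 < j ≤ K`. Away from the kinks
`w ⬝ h_{i-1}(x) = 0` the chain rule gives the formula; if `t` does not survive, the loss is constant
in `w`.
-/

open Matrix

open Finset

def zeroExtend {α : Type*} [Zero α] {m : ℕ} (v : Fin m → α) (k : ℕ) : α :=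
  if h : k < m then v ⟨k, h⟩ else 0

@[simp] lemma zeroExtend_val {α : Type*} [Zero α] {m : ℕ} (v : Fin m → α) (q : Fin m) :
    zeroExtend v q = v q := by
  simp [zeroExtend]

lemma zeroExtend_of_le {α : Type*} [Zero α] {m k : ℕ} (v : Fin m → α) (hk : m ≤ k) :
    zeroExtend v k = 0 := by
  simp [zeroExtend, hk.not_gt]

lemma zeroExtend_relu {m : ℕ} (v : Fin m → ℝ) (k : ℕ) :
    zeroExtend (relu v) k = max (zeroExtend v k) 0 := by
  unfold zeroExtend relu; split_ifs <;> simp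

lemma sum_eq_sum_range_zeroExtend {M : Type*} [AddCommMonoid M] {m : ℕ} (v : Fin m → M) :
    ∑ q, v q = ∑ k ∈ range m, zeroExtend v k := by
  simp_rw [← Fin.sum_univ_eq_sum_range (zeroExtend v), zeroExtend_val]

def scaledRectId {l m : ℕ} (a : ℝ) : Matrix (Fin l) (Fin m) ℝ :=
  of fun p q => if (p : ℕ) = q then a else 0

lemma zeroExtend_scaledRectId_mulVec {l m : ℕ} (a : ℝ) (v : Fin m → ℝ) (k : ℕ) :
    zeroExtend (scaledRectId (l := l) a *ᵥ v) k = if k < l then a * zeroExtend v k else 0 := by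
  by_cases hk : k < l
  · have hsum :
        ∑ j ∈ range m, (if k = j then a else 0) * zeroExtend v j = a * zeroExtend v k := by
      simp_rw [ite_mul, zero_mul, sum_ite_eq, mem_range]
      split_ifs with hkm
      · rfl
      · rw [zeroExtend_of_le v (not_lt.1 hkm), mul_zero]
    rw [if_pos hk, ← hsum,
      ← Fin.sum_univ_eq_sum_range (fun j => (if k = j then a else 0) * zeroExtend v j)]
    simp [zeroExtend, hk, scaledRectId, mulVec, dotProduct]
  · simp [zeroExtend, hk]

lemma zeroExtend_scaledRectId_chain {n : ℕ → ℕ} {a : ℕ → ℝ} {i₀ J : ℕ}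
    (z : (j : ℕ) → Fin (n j) → ℝ) (hz₀ : 0 ≤ z i₀) (ha : ∀ j, i₀ ≤ j → j < J → 0 ≤ a j)
    (hz : ∀ j, i₀ ≤ j → j < J → z (j + 1) = relu (scaledRectId (a j) *ᵥ z j))
    {j : ℕ} (hi₀j : i₀ ≤ j) (hjJ : j ≤ J) (k : ℕ) :
    zeroExtend (z j) k = (∏ l ∈ Ico i₀ j, a l) *
      if ∀ l ∈ Ioc i₀ j, k < n l then zeroExtend (z i₀) k else 0 := by
  induction j, hi₀j using Nat.le_induction generalizing k with
  | base => simp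
  | succ j hi₀j ih =>
    have hP : 0 ≤ ∏ l ∈ Ico i₀ j, a l :=
      prod_nonneg fun l hl => ha l (mem_Ico.1 hl).1 (by have := (mem_Ico.1 hl).2; omega)
    have hz₀k : 0 ≤ zeroExtend (z i₀) k := by
      unfold zeroExtend; split_ifs
      exacts [hz₀ _, le_rfl]
    rw [hz j hi₀j (by omega), zeroExtend_relu, zeroExtend_scaledRectId_mulVec, ih (by omega),
      prod_Ico_succ_top hi₀j]
    simp only [← insert_Ioc_right_eq_Ioc_add_one hi₀j, forall_mem_insert]
    by_cases hk : k < n (j + 1)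
    · have := ha j hi₀j (by omega)
      simp only [hk, if_true, true_and]
      split_ifs
      · rw [max_eq_left (by positivity)]; ring
      · simp
    · simp [hk]

lemma sum_scaledRectId_chain {n : ℕ → ℕ} {a : ℕ → ℝ} {i₀ J : ℕ}
    (z : (j : ℕ) → Fin (n j) → ℝ) (hz₀ : 0 ≤ z i₀) (ha : ∀ j, i₀ ≤ j → j < J → 0 ≤ a j)
    (hz : ∀ j, i₀ ≤ j → j < J → z (j + 1) = relu (scaledRectId (a j) *ᵥ z j)) (hi₀J : i₀ < J) :
    ∑ p, z J p = (∏ l ∈ Ico i₀ J, a l) *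
      ∑ q ∈ univ.filter (fun q : Fin (n i₀) => ∀ l ∈ Ioc i₀ J, (q : ℕ) < n l), z i₀ q := by
  set F : ℕ → ℝ := fun k => if ∀ l ∈ Ioc i₀ J, k < n l then zeroExtend (z i₀) k else 0
  have hF : ∀ k, min (n i₀) (n J) ≤ k → F k = 0 := by
    intro k hk
    rcases min_le_iff.1 hk with hk | hk
    · simp [F, zeroExtend_of_le _ hk]
    · exact if_neg fun h => hk.not_gt (h J (right_mem_Ioc.2 hi₀J))
  rw [sum_eq_sum_range_zeroExtend,
    sum_congr rfl fun k _ => zeroExtend_scaledRectId_chain z hz₀ ha hz hi₀J.le le_rfl k,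
    ← mul_sum, sum_filter]
  congr 1
  calc ∑ k ∈ range (n J), F k
      = ∑ k ∈ range (min (n i₀) (n J)), F k := eventually_constant_sum hF (min_le_right _ _)
    _ = ∑ k ∈ range (n i₀), F k := (eventually_constant_sum hF (min_le_left _ _)).symm
    _ = ∑ q : Fin (n i₀), F q := (Fin.sum_univ_eq_sum_range F _).symm
    _ = _ := by simp only [F, zeroExtend_val]

lemma sum_relu_updateRow_mulVec {l m : ℕ} (A : Matrix (Fin l) (Fin m) ℝ) (t : Fin l)
    (w h : Fin m → ℝ) (s : Finset (Fin l)) :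
    ∑ q ∈ s, relu (updateRow A t w *ᵥ h) q =
      (if t ∈ s then max (w ⬝ᵥ h) 0 else 0) + ∑ q ∈ s.erase t, relu (A *ᵥ h) q := by
  have hrest : ∑ q ∈ s.erase t, relu (updateRow A t w *ᵥ h) q =
      ∑ q ∈ s.erase t, relu (A *ᵥ h) q :=
    sum_congr rfl fun q hq => by simp [relu, mulVec, updateRow_ne (ne_of_mem_erase hq)]
  split_ifs with ht
  · rw [← add_sum_erase s _ ht, hrest]; simp [relu, mulVec]
  · rw [erase_eq_of_notMem ht] at hrest ⊢; rw [hrest, zero_add]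

lemma hasDerivAt_max_zero {y : ℝ} (hy : y ≠ 0) :
    HasDerivAt (fun y => max y 0) (if 0 ≤ y then 1 else 0) y := by
  rcases hy.lt_or_gt with hneg | hpos
  · rw [if_neg hneg.not_ge]
    refine (hasDerivAt_const y 0).congr_of_eventuallyEq ?_
    filter_upwards [eventually_lt_nhds hneg] with z hz using max_eq_right hz.le
  · rw [if_pos hpos.le]
    refine (hasDerivAt_id y).congr_of_eventuallyEq ?_
    filter_upwards [eventually_gt_nhds hpos] with z hz using max_eq_left hz.le

noncomputable def dotProductCLM {k : ℕ} (h : Fin k → ℝ) : (Fin k → ℝ) →L[ℝ] ℝ :=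
  LinearMap.toContinuousLinearMap (∑ q, h q • LinearMap.proj q)

lemma dotProductCLM_apply {k : ℕ} (h w : Fin k → ℝ) : dotProductCLM h w = w ⬝ᵥ h := by
  simp [dotProductCLM, dotProduct, mul_comm]

lemma hasFDerivAt_dotProduct {k : ℕ} (h w₀ : Fin k → ℝ) :
    HasFDerivAt (fun w => w ⬝ᵥ h) (dotProductCLM h) w₀ := by
  convert (dotProductCLM h).hasFDerivAt using 1
  exact funext fun w => (dotProductCLM_apply h w).symm

lemma hasFDerivAt_sum_comp_relu_dotProduct {ι : Type*} {k : ℕ} {φ φ' : ℝ → ℝ}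
    (hφ : ∀ y, HasDerivAt φ (φ' y) y) (D : Finset ι) (α : ℝ) (h : ι → Fin k → ℝ) (β : ι → ℝ)
    {w₀ : Fin k → ℝ} (hw₀ : ∀ x ∈ D, w₀ ⬝ᵥ h x ≠ 0) :
    HasFDerivAt (fun w => ∑ x ∈ D, φ (α * (max (w ⬝ᵥ h x) 0 + β x)))
      (∑ x ∈ D, (φ' (α * (max (w₀ ⬝ᵥ h x) 0 + β x)) * α *
        (if 0 ≤ w₀ ⬝ᵥ h x then 1 else 0)) • dotProductCLM (h x)) w₀ := by
  refine HasFDerivAt.fun_sum fun x hx => ?_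
  have hrelu :=
    (hasDerivAt_max_zero (hw₀ x hx)).comp_hasFDerivAt w₀ (hasFDerivAt_dotProduct (h x) w₀)
  have := (hφ _).comp_hasFDerivAt w₀ ((hrelu.add_const (β x)).const_mul α)
  simpa only [Function.comp_def, smul_smul, mul_assoc] using this

theorem loss_gradient_formula_general (K : ℕ) (n : ℕ → ℕ)
    (s a : ℕ → ℝ) (i : ℕ) (hi : i + 1 < K)
    (ha : ∀ j, i < j → j < K → 0 < a j ∧ a j ≤ s j)
    (c : ℝ)
    (W : (j : ℕ) → Matrix (Fin (n (j + 1))) (Fin (n j)) ℝ)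
    (hW : ∀ j, i < j → j < K →
      W j = Matrix.of fun (p : Fin (n (j + 1))) (q : Fin (n j)) =>
        if (p : ℕ) = (q : ℕ) then a j else 0)
    (t : Fin (n (i + 1)))
    (D : Finset (Fin (n 0) → ℝ))
    (f g : ℝ → ℝ) (d : ℝ → ℝ)
    (hd : ∀ v0 : ℝ, HasDerivAt (fun v => f (g v)) (d v0) v0)
    (H : (Fin (n i) → ℝ) → (j : ℕ) → (Fin (n 0) → ℝ) → (Fin (n j) → ℝ))
    (hH0 : ∀ w x, H w 0 x = x)
    (hHrec : ∀ w j, j ≠ i → ∀ x, H w (j + 1) x = relu ((W j).mulVec (H w j x)))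
    (hHi : ∀ w x, H w (i + 1) x = relu ((Matrix.updateRow (W i) t w).mulVec (H w i x)))
    (u : (Fin (n i) → ℝ) → (Fin (n 0) → ℝ) → ℝ)
    (hu : ∀ w x, u w x = c * ∑ k, H w K x k)
    (ρ : (Fin (n i) → ℝ) → ℝ)
    (hρ : ∀ w, ρ w = (D.card : ℝ)⁻¹ * ∑ x ∈ D, f (g (u w x))) :
    ∀ w0 : Fin (n i) → ℝ,
      ((∀ x ∈ D, w0 ⬝ᵥ H w0 i x ≠ 0) →
        (∀ j, i + 1 < j → j ≤ K → (t : ℕ) < n j) →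
        HasFDerivAt ρ
          (LinearMap.toContinuousLinearMap
            (∑ q : Fin (n i),
              ((c * ∏ j ∈ Finset.Ioo i K, a j) * (D.card : ℝ)⁻¹ *
                  ∑ x ∈ D, d (u w0 x) *
                    (if 0 ≤ w0 ⬝ᵥ H w0 i x then (1 : ℝ) else 0) * H w0 i x q) •
                (LinearMap.proj q : ((Fin (n i)) → ℝ) →ₗ[ℝ] ℝ))) w0) ∧
      ((∃ j, i + 1 < j ∧ j ≤ K ∧ n j ≤ (t : ℕ)) →
        HasFDerivAt ρ (0 : (Fin (n i) → ℝ) →L[ℝ] ℝ) w0) := by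
  intro w₀
  -- the ascription `(1 : ℕ)` is needed for the decidability instance of the filter to be found
  set S : Finset (Fin (n (i + 1))) := {q | ∀ l ∈ Ioc (i + (1 : ℕ)) K, (q : ℕ) < n l}
  set C : (Fin (n 0) → ℝ) → ℝ := fun x => ∑ q ∈ S.erase t, relu (W i *ᵥ H w₀ i x) q
  have hprefix : ∀ w, ∀ j ≤ i, ∀ x, H w j x = H w₀ j x := by
    intro w j hj x
    induction j generalizing x with
    | zero => rw [hH0, hH0]
    | succ j ih => rw [hHrec w j (by omega), hHrec w₀ j (by omega), ih (by omega)]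
  have hout : ∀ w x, u w x =
      c * (∏ l ∈ Ioo i K, a l) * ((if t ∈ S then max (w ⬝ᵥ H w₀ i x) 0 else 0) + C x) := by
    intro w x
    rw [hu, ← Ico_add_one_left_eq_Ioo, sum_scaledRectId_chain (fun j => H w j x)
      (by rw [hHi]; exact fun q => le_max_right _ _)
      (fun j hj hjK => (ha j (by omega) hjK).1.le)
      (fun j hj hjK => by rw [hHrec w j (by omega), hW j (by omega) hjK]; rfl) hi,
      hHi, hprefix w i le_rfl, sum_relu_updateRow_mulVec, mul_assoc]
  refine ⟨fun hx₀ ht => ?_, fun ⟨j, hij, hjK, htj⟩ => ?_⟩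
  · have htS : t ∈ S := by simpa [S] using fun l hl => ht l (mem_Ioc.1 hl).1 (mem_Ioc.1 hl).2
    have hρ' : ρ = fun w => (D.card : ℝ)⁻¹ *
        ∑ x ∈ D, f (g (c * (∏ l ∈ Ioo i K, a l) * (max (w ⬝ᵥ H w₀ i x) 0 + C x))) := by
      funext w; simp only [hρ, hout, if_pos htS]
    rw [hρ']
    refine ((hasFDerivAt_sum_comp_relu_dotProduct hd D _ _ C hx₀).const_mul _).congr_fderiv ?_
    change _ = dotProductCLM _
    ext v
    simp only [hout, if_pos htS, _root_.smul_apply, _root_.sum_apply,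
      dotProductCLM_apply, dotProduct, smul_eq_mul, mul_sum]
    rw [sum_comm]
    exact sum_congr rfl fun x _ => sum_congr rfl fun q _ => by ring
  · have htS : t ∉ S := fun h => ((mem_filter.1 h).2 j (mem_Ioc.2 ⟨hij, hjK⟩)).not_ge htj
    have hρ' : ρ = fun _ => ρ w₀ := by
      funext w; simp only [hρ, hout, if_neg htS]
    rw [hρ']
    exact hasFDerivAt_const _ _

/-- For the scalar-output network `h(x) = g(W h_K(x))` with `W = c·𝟙ᵀ`
(`c > 0`) and tail weights `W_j = a_j I_j` for `j > i` (`a_j > 0`), the empirical loss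
`L(w) = (1/m) ∑_{x∈D} f(g(u_w(x)))`, viewed as a function of the `t`-th row `w` of `W_i`,
has gradient `(c ∏_{j>i} a_j / m) ∑_{x∈D} (f∘g)'(u(x))·𝟙[w·h_{i-1}(x) ≥ 0]·h_{i-1}(x)ᵀ`
when `t` is below all downstream widths (at points where no `w·h_{i-1}(x)` vanishes), and
gradient `0` when `t` exceeds some downstream width. -/
theorem loss_gradient_formula (K : ℕ) (n : ℕ → ℕ) (hn : ∀ j, 0 < n j)
    (s a : ℕ → ℝ) (i : ℕ) (hi : i + 1 < K)
    (ha : ∀ j, i < j → j < K → 0 < a j ∧ a j ≤ s j)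
    (c : ℝ) (hc : 0 < c)
    (W : (j : ℕ) → Matrix (Fin (n (j + 1))) (Fin (n j)) ℝ)
    (hW : ∀ j, i < j → j < K →
      W j = Matrix.of fun (p : Fin (n (j + 1))) (q : Fin (n j)) =>
        if (p : ℕ) = (q : ℕ) then a j else 0)
    (t : Fin (n (i + 1)))
    (D : Finset (Fin (n 0) → ℝ))
    (f g : ℝ → ℝ) (d : ℝ → ℝ)
    (hd : ∀ v0 : ℝ, HasDerivAt (fun v => f (g v)) (d v0) v0)
    (H : (Fin (n i) → ℝ) → (j : ℕ) → (Fin (n 0) → ℝ) → (Fin (n j) → ℝ))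
    (hH0 : ∀ w x, H w 0 x = x)
    (hHrec : ∀ w j, j ≠ i → ∀ x, H w (j + 1) x = relu ((W j).mulVec (H w j x)))
    (hHi : ∀ w x, H w (i + 1) x = relu ((Matrix.updateRow (W i) t w).mulVec (H w i x)))
    (u : (Fin (n i) → ℝ) → (Fin (n 0) → ℝ) → ℝ)
    (hu : ∀ w x, u w x = c * ∑ k, H w K x k)
    (ρ : (Fin (n i) → ℝ) → ℝ)
    (hρ : ∀ w, ρ w = (D.card : ℝ)⁻¹ * ∑ x ∈ D, f (g (u w x))) :
    ∀ w0 : Fin (n i) → ℝ,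
      ((∀ x ∈ D, w0 ⬝ᵥ H w0 i x ≠ 0) →
        (∀ j, i + 1 < j → j ≤ K → (t : ℕ) < n j) →
        HasFDerivAt ρ
          (LinearMap.toContinuousLinearMap
            (∑ q : Fin (n i),
              ((c * ∏ j ∈ Finset.Ioo i K, a j) * (D.card : ℝ)⁻¹ *
                  ∑ x ∈ D, d (u w0 x) *
                    (if 0 ≤ w0 ⬝ᵥ H w0 i x then (1 : ℝ) else 0) * H w0 i x q) •
                (LinearMap.proj q : ((Fin (n i)) → ℝ) →ₗ[ℝ] ℝ))) w0) ∧
      ((∃ j, i + 1 < j ∧ j ≤ K ∧ n j ≤ (t : ℕ)) →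
        HasFDerivAt ρ (0 : (Fin (n i) → ℝ) →L[ℝ] ℝ) w0) :=
  loss_gradient_formula_general K n s a i hi ha c W hW t D f g d hd H hH0 hHrec hHi u hu ρ hρ
end
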